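/- Let λ, μ be partitions with n nonnegative integer parts and let w ∈ S_n. Then K_{λ,μ}(w w_0) = GT(λ,w,μ) as subsets of GT(λ)×GT(μ); that is, the union of all reduced BiKogan faces K_{λ,μ}(F,F′) with ϖ(F,F′) = w w_0 equals the set of pairs (P,Q) ∈ GT(λ)×GT(μ) with 𝔭(P,Q) ≤ w. -/

import Mathlib

/-!
Lengths are counted by inversions, and the Bruhat order is generated by the steps
`u < u * (a b)` with `a < b`, `u a < u b`. With these, the subword property holds, and
the lifting property at a right ascent `D < D s` says that the Bruhat interval below `D s` is
the interval below `D` together with its translate by `s`. By induction along the word this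
gives the key fact: the interval below the Demazure product `*(W)` consists exactly of the
products of subwords of `W`.

A pair `(P, Q)` lies on the BiKogan face `K_{λ,μ}(F, F')` exactly when the word of
`ϖ(F, F') = σ̄(F)⁻¹ σ(F')`, read in the order of `𝔣(P) 𝔦(Q)`, is a subword of `w(P, Q)`, and the
face is reduced exactly when this subword is reduced. Since right multiplication by `w₀`
reverses the Bruhat order, `𝔭(P, Q) ≤ w` means `w w₀ ≤ *(w(P, Q))`, i.e. that `w w₀` is the
product of a (reduced) subword of `w(P, Q)`, i.e. that `(P, Q)` lies on a reduced face with
`ϖ = w w₀`.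
-/

open scoped Classical

namespace KK

/-- The simple transposition `s_j = (j, j+1)` in `S_n` (1-indexed letters `1 ≤ j ≤ n-1`);
junk value `1` out of range. -/
def simpleRefl (n : ℕ) (j : ℕ) : Equiv.Perm (Fin n) :=
  if h : 1 ≤ j ∧ j ≤ n - 1 then
    Equiv.swap ⟨j - 1, by omega⟩ ⟨j, by omega⟩
  else 1

/-- The permutation represented by a word in the simple transpositions. -/
def wordProd (n : ℕ) (l : List ℕ) : Equiv.Perm (Fin n) :=
  (l.map (simpleRefl n)).prod

/-- Coxeter length: minimal length of a word in simple transpositions representing `w`. -/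
noncomputable def len (n : ℕ) (w : Equiv.Perm (Fin n)) : ℕ :=
  sInf {k | ∃ l : List ℕ, (∀ j ∈ l, 1 ≤ j ∧ j ≤ n - 1) ∧ l.length = k ∧ wordProd n l = w}

/-- A word is reduced if its letters are genuine simple-transposition indices and its
length equals the Coxeter length of the permutation it represents. -/
def IsReduced (n : ℕ) (l : List ℕ) : Prop :=
  (∀ j ∈ l, 1 ≤ j ∧ j ≤ n - 1) ∧ len n (wordProd n l) = l.length

/-- Bruhat order on `S_n`: `u ≤ w` iff some reduced word for `w` contains a reduced word
for `u` as a subword. -/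
def bruhatLE (n : ℕ) (u w : Equiv.Perm (Fin n)) : Prop :=
  ∃ l l' : List ℕ, IsReduced n l ∧ wordProd n l = w ∧
    l'.Sublist l ∧ IsReduced n l' ∧ wordProd n l' = u

/-- `m` is the greatest element of `K` in the Bruhat order (hence the unique maximal one). -/
def IsBruhatGreatest (n : ℕ) (K : Set (Equiv.Perm (Fin n))) (m : Equiv.Perm (Fin n)) : Prop :=
  m ∈ K ∧ ∀ u ∈ K, bruhatLE n u m

/-- `m` is the least element of `K` in the Bruhat order (hence the unique minimal one). -/
def IsBruhatLeast (n : ℕ) (K : Set (Equiv.Perm (Fin n))) (m : Equiv.Perm (Fin n)) : Prop :=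
  m ∈ K ∧ ∀ u ∈ K, bruhatLE n m u

/-- One step of the Demazure product: `w * s_j = max {w, w s_j}` in the Bruhat order. -/
noncomputable def demStep (n : ℕ) (w : Equiv.Perm (Fin n)) (j : ℕ) : Equiv.Perm (Fin n) :=
  if len n w < len n (w * simpleRefl n j) then w * simpleRefl n j else w

/-- The Demazure product `*(w)` of a (not necessarily reduced) word. -/
noncomputable def demProd (n : ℕ) (l : List ℕ) : Equiv.Perm (Fin n) :=
  l.foldl (demStep n) 1

/-- The binary Demazure product of two permutations, `w * w' = max I(w)I(w')`. -/
noncomputable def demMul (n : ℕ) (w w' : Equiv.Perm (Fin n)) : Equiv.Perm (Fin n) :=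
  if h : ∃ m, IsBruhatGreatest n
      {x | ∃ u v, bruhatLE n u w ∧ bruhatLE n v w' ∧ x = u * v} m
  then h.choose else 1

/-- The longest element `w₀` of `S_n`. -/
def w0 (n : ℕ) : Equiv.Perm (Fin n) := Fin.revPerm



/-- `μ` is a partition with `n` nonnegative integer parts `μ 1 ≥ ⋯ ≥ μ n ≥ 0`. -/
def IsPartition (n : ℕ) (μ : ℕ → ℤ) : Prop :=
  (∀ i, 1 ≤ i → i < n → μ (i + 1) ≤ μ i) ∧ 0 ≤ μ n

/-- `(i, j)` indexes an entry strictly below the top in the triangular array: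
`n ≥ i > j ≥ 1`. -/
def inTriangle (n : ℕ) (p : ℕ × ℕ) : Prop := 1 ≤ p.2 ∧ p.2 < p.1 ∧ p.1 ≤ n

/-- A Gelfand–Tsetlin pattern of size `n`, encoded as a function `a : ℕ → ℕ → ℝ`
(value `a i j` for `n ≥ i ≥ j ≥ 1`, and `0` outside the triangle). -/
def IsGTArray (n : ℕ) (a : ℕ → ℕ → ℝ) : Prop :=
  (∀ i j, 1 ≤ j → j < i → i ≤ n →
      0 ≤ a i j - a (i - 1) j ∧ 0 ≤ a (i - 1) j - a i (j + 1)) ∧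
  (∀ i j, j = 0 ∨ i < j ∨ n < i → a i j = 0)

/-- The Gelfand–Tsetlin polytope `GT(μ)`: GT patterns of size `n` with bottom row `μ`. -/
def GTset (n : ℕ) (μ : ℕ → ℤ) : Set (ℕ → ℕ → ℝ) :=
  {a | IsGTArray n a ∧ ∀ j, 1 ≤ j → j ≤ n → a n j = (μ j : ℝ)}

/-- The integral points `GT_ℤ(μ)` of the Gelfand–Tsetlin polytope. -/
def GTZ (n : ℕ) (μ : ℕ → ℤ) : Set (ℕ → ℕ → ℝ) :=
  {a ∈ GTset n μ | ∀ i j, ∃ m : ℤ, a i j = (m : ℝ)}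

/-- The weight of a GT pattern: `wt a i = Σ_{j=1}^i a i j − Σ_{j=1}^{i-1} a (i-1) j`. -/
noncomputable def wt (a : ℕ → ℕ → ℝ) (i : ℕ) : ℝ :=
  (∑ j ∈ Finset.Icc 1 i, a i j) - ∑ j ∈ Finset.Icc 1 (i - 1), a (i - 1) j

/-- The pairs `(i,j)` with `n ≥ i > j ≥ 1` in increasing lexicographic order. -/
def pairsLex (n : ℕ) : List (ℕ × ℕ) :=
  (List.range' 2 (n - 1)).flatMap fun i => (List.range' 1 (i - 1)).map fun j => (i, j)

/-- The pairs `(i,j)` with `n ≥ i > j ≥ 1` in increasing order for the total order in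
which `(i,j)` precedes `(i',j')` iff `i < i'`, or `i = i'` and `j > j'`. -/
def pairsBar (n : ℕ) : List (ℕ × ℕ) :=
  (List.range' 2 (n - 1)).flatMap fun i => ((List.range' 1 (i - 1)).reverse).map fun j => (i, j)

/-- The pairs `(i,j)` with `n ≥ i > j ≥ 1` in decreasing order for the total order in
which `(i,j)` precedes `(i',j')` iff `i < i'`, or `i = i'` and `j > j'`:
`i` descending and, within each `i`, `j` ascending. -/
def pairsFin (n : ℕ) : List (ℕ × ℕ) :=
  ((List.range' 2 (n - 1)).reverse).flatMap fun i => (List.range' 1 (i - 1)).map fun j => (i, j)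

/-- The word `𝔣(P)`: list the pairs `(i,j)` with `a (i-1) j = a i (j+1)` in the order of
`pairsFin` and record the letter `j` for each. -/
noncomputable def fWord (n : ℕ) (a : ℕ → ℕ → ℝ) : List ℕ :=
  ((pairsFin n).filter fun p => a (p.1 - 1) p.2 = a p.1 (p.2 + 1)).map fun p => p.2

/-- The word `𝔦(Q)`: list the pairs `(i,j)` with `b i j = b (i-1) j` in increasing
lexicographic order and record the letter `i - j` for each. -/
noncomputable def iWord (n : ℕ) (b : ℕ → ℕ → ℝ) : List ℕ :=
  ((pairsLex n).filter fun p => b p.1 p.2 = b (p.1 - 1) p.2).map fun p => p.1 - p.2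



/-- The sequence `d_t`, `1 ≤ t ≤ i+1`, used to define the crystal operators `e_i, f_i`
(with the convention `a_{k,k+1} = 0` for `k ∈ {i-1, i}`). -/
noncomputable def dseq (a : ℕ → ℕ → ℝ) (i : ℕ) : ℕ → ℝ
  | 0 => 0
  | 1 => a i 1 - a (i + 1) 1
  | (t + 2) => dseq a i (t + 1) + a i (t + 1) + (if t + 2 = i + 1 then 0 else a i (t + 2))
      - (if t + 1 = i then 0 else a (i - 1) (t + 1)) - a (i + 1) (t + 2)

/-- `d = min {d_1, …, d_{i+1}}`. -/
noncomputable def dmin (a : ℕ → ℕ → ℝ) (i : ℕ) : ℝ :=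
  ((Finset.Icc 1 (i + 1)).image (dseq a i)).min'
    (Finset.Nonempty.image ⟨1, by simp⟩ _)

/-- `m`: the smallest index `t ∈ [1, i+1]` with `d_t = d`. -/
noncomputable def mIdx (a : ℕ → ℕ → ℝ) (i : ℕ) : ℕ :=
  sInf {t | t ∈ Finset.Icc 1 (i + 1) ∧ dseq a i t = dmin a i}

/-- `M`: the largest index `t ∈ [1, i+1]` with `d_t = d`. -/
noncomputable def MIdx (a : ℕ → ℕ → ℝ) (i : ℕ) : ℕ :=
  sSup {t | t ∈ Finset.Icc 1 (i + 1) ∧ dseq a i t = dmin a i}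

/-- The raising crystal operator `e_i` (`none` plays the role of `0`). -/
noncomputable def eOp (i : ℕ) (a : ℕ → ℕ → ℝ) : Option (ℕ → ℕ → ℝ) :=
  if dmin a i = 0 then none
  else some fun i' j' => if i' = i ∧ j' = mIdx a i then a i' j' + 1 else a i' j'

/-- The lowering crystal operator `f_i` (`none` plays the role of `0`). -/
noncomputable def fOp (i : ℕ) (a : ℕ → ℕ → ℝ) : Option (ℕ → ℕ → ℝ) :=
  if MIdx a i = i + 1 then none
  else some fun i' j' => if i' = i ∧ j' = MIdx a i then a i' j' - 1 else a i' j'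

/-- `m`-fold iteration of a partial operator. -/
noncomputable def iterOp (op : (ℕ → ℕ → ℝ) → Option (ℕ → ℕ → ℝ)) :
    ℕ → (ℕ → ℕ → ℝ) → Option (ℕ → ℕ → ℝ)
  | 0 => fun x => some x
  | (m + 1) => fun x => (op x).bind (iterOp op m)

/-- Apply `op i₁ ^ m₁ ∘ ⋯ ∘ op i_k ^ m_k` to `x`, given the list `[(i₁,m₁),…,(i_k,m_k)]`
(the last pair acts first). -/
noncomputable def applyWord (op : ℕ → (ℕ → ℕ → ℝ) → Option (ℕ → ℕ → ℝ)) :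
    List (ℕ × ℕ) → (ℕ → ℕ → ℝ) → Option (ℕ → ℕ → ℝ)
  | [] => fun x => some x
  | (p :: rest) => fun x => (applyWord op rest x).bind (iterOp (op p.1) p.2)

/-- The highest-weight element `G⁰_μ` of `GT_ℤ(μ)`: the element killed by every `e_i`. -/
noncomputable def G0 (n : ℕ) (μ : ℕ → ℤ) : ℕ → ℕ → ℝ :=
  if h : ∃ P, P ∈ GTZ n μ ∧ ∀ i, 1 ≤ i → i ≤ n - 1 → eOp i P = none then h.choose else 0

/-- The lowest-weight element `G*_μ` of `GT_ℤ(μ)`: the element killed by every `f_i`. -/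
noncomputable def Gstar (n : ℕ) (μ : ℕ → ℤ) : ℕ → ℕ → ℝ :=
  if h : ∃ P, P ∈ GTZ n μ ∧ ∀ i, 1 ≤ i → i ≤ n - 1 → fOp i P = none then h.choose else 0

/-- The Demazure crystal `D(μ, w)` computed from the reduced word `l` for `w`:
`{f_{i₁}^{m₁} ⋯ f_{i_k}^{m_k}(G⁰_μ)} ∩ GT_ℤ(μ)`. -/
noncomputable def demCrystal (n : ℕ) (μ : ℕ → ℤ) (l : List ℕ) : Set (ℕ → ℕ → ℝ) :=
  {P | P ∈ GTZ n μ ∧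
    ∃ ms : List ℕ, ms.length = l.length ∧ applyWord fOp (l.zip ms) (G0 n μ) = some P}

/-- The opposite Demazure crystal `D(μ, w)^op` computed from the reduced word `l`
for `w·w₀`: `{e_{j₁}^{m₁} ⋯ e_{j_t}^{m_t}(G*_μ)} ∩ GT_ℤ(μ)`. -/
noncomputable def opDemCrystal (n : ℕ) (μ : ℕ → ℤ) (l : List ℕ) : Set (ℕ → ℕ → ℝ) :=
  {P | P ∈ GTZ n μ ∧
    ∃ ms : List ℕ, ms.length = l.length ∧ applyWord eOp (l.zip ms) (Gstar n μ) = some P}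

/-- `σ(F)`: the product of `s_{i-j}` over `(i,j) ∈ F` in increasing lexicographic order. -/
noncomputable def sigmaF (n : ℕ) (F : Finset (ℕ × ℕ)) : Equiv.Perm (Fin n) :=
  wordProd n (((pairsLex n).filter fun p => p ∈ F).map fun p => p.1 - p.2)

/-- `σ̄(F)`: the product of `s_j` over `(i,j) ∈ F` in increasing order for the total
order in which `(i,j)` precedes `(i',j')` iff `i < i'`, or `i = i'` and `j > j'`. -/
noncomputable def sigmaBarF (n : ℕ) (F : Finset (ℕ × ℕ)) : Equiv.Perm (Fin n) :=
  wordProd n (((pairsBar n).filter fun p => p ∈ F).map fun p => p.2)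

/-- The Kogan face `K(μ, F)`: the face of `GT(μ)` cut out by `a i j = a (i-1) j`,
`(i,j) ∈ F`. -/
def KoganFace (n : ℕ) (μ : ℕ → ℤ) (F : Finset (ℕ × ℕ)) : Set (ℕ → ℕ → ℝ) :=
  {a ∈ GTset n μ | ∀ p ∈ F, a p.1 p.2 = a (p.1 - 1) p.2}

/-- The dual Kogan face `K̄(μ, F)`: the face of `GT(μ)` cut out by
`a (i-1) j = a i (j+1)`, `(i,j) ∈ F`. -/
def dualKoganFace (n : ℕ) (μ : ℕ → ℤ) (F : Finset (ℕ × ℕ)) : Set (ℕ → ℕ → ℝ) :=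
  {a ∈ GTset n μ | ∀ p ∈ F, a (p.1 - 1) p.2 = a p.1 (p.2 + 1)}

/-- The BiKogan face `K_{λ,μ}(F, F')` of `GT(λ) × GT(μ)`. -/
def biKoganFace (n : ℕ) (lam μ : ℕ → ℤ) (F F' : Finset (ℕ × ℕ)) :
    Set ((ℕ → ℕ → ℝ) × (ℕ → ℕ → ℝ)) :=
  {PQ | PQ.1 ∈ GTset n lam ∧ PQ.2 ∈ GTset n μ ∧
    (∀ p ∈ F, PQ.1 (p.1 - 1) p.2 = PQ.1 p.1 (p.2 + 1)) ∧
    (∀ p ∈ F', PQ.2 p.1 p.2 = PQ.2 (p.1 - 1) p.2)}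

/-- `ϖ(F, F') = σ̄(F)⁻¹ · σ(F')`. -/
noncomputable def biVarpi (n : ℕ) (F F' : Finset (ℕ × ℕ)) : Equiv.Perm (Fin n) :=
  (sigmaBarF n F)⁻¹ * sigmaF n F'

/-- The BiKogan face `K_{λ,μ}(F, F')` is reduced if `ℓ(ϖ(F,F')) = |F| + |F'|`. -/
def biKoganReduced (n : ℕ) (F F' : Finset (ℕ × ℕ)) : Prop :=
  len n (biVarpi n F F') = F.card + F'.card


open Equiv Finset

section Lists

theorem filter_mem_toFinset_of_sublist {α : Type*} [DecidableEq α] {l m : List α}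
    (hl : l.Nodup) (h : m.Sublist l) : l.filter (· ∈ m.toFinset) = m := by
  induction h with
  | slnil => rfl
  | @cons m l a h ih =>
    obtain ⟨ha, hl⟩ := List.nodup_cons.1 hl
    rw [List.filter_cons_of_neg (by simpa using fun ham => ha (h.subset ham)), ih hl]
  | @cons_cons m l a h ih =>
    obtain ⟨ha, hl⟩ := List.nodup_cons.1 hl
    rw [List.filter_cons_of_pos (by simp)]
    refine congrArg _ ((List.filter_congr fun x hx => ?_).trans (ih hl))
    have hxa : x ≠ a := fun hxa => ha (hxa ▸ hx)
    simp only [List.toFinset_cons, mem_insert, hxa, false_or]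

theorem length_filter_mem_eq_card {α : Type*} [DecidableEq α] {l : List α} {s : Finset α}
    (hl : l.Nodup) (hs : ∀ x ∈ s, x ∈ l) : (l.filter (· ∈ s)).length = #s := by
  rw [← List.toFinset_card_of_nodup (hl.filter _)]
  congr 1
  ext x
  simpa using fun hx => hs x hx

theorem exists_finset_of_sublist_map_filter {α β : Type*} [DecidableEq α] {L : List α}
    (hL : L.Nodup) {p : α → Bool} {g : α → β} {l : List β}
    (h : l.Sublist ((L.filter p).map g)) :
    ∃ s : Finset α, (∀ x ∈ s, x ∈ L ∧ p x) ∧ (L.filter (· ∈ s)).map g = l := by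
  obtain ⟨m, hm, rfl⟩ := List.sublist_map_iff.1 h
  refine ⟨m.toFinset, fun x hx => List.mem_filter.1 (hm.subset (List.mem_toFinset.1 hx)), ?_⟩
  rw [filter_mem_toFinset_of_sublist hL (hm.trans List.filter_sublist)]

theorem nodup_flatMap_map_prodMk {α β : Type*} {L : List α} (hL : L.Nodup)
    {g : α → List β} (hg : ∀ i, (g i).Nodup) :
    (L.flatMap fun i => (g i).map fun j => (i, j)).Nodup := by
  refine List.nodup_flatMap.2 ⟨fun i _ => (hg i).map fun _ _ h => (Prod.mk.inj h).2,
    hL.pairwise_of_forall_ne fun i _ i' _ hii' => ?_⟩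
  simp only [Function.onFun, List.disjoint_left, List.mem_map]
  rintro _ ⟨j, -, rfl⟩ ⟨j', -, h⟩
  exact hii' (Prod.mk.inj h).1.symm

end Lists

section Words

variable {n : ℕ}

theorem exists_adjacent_of_letter {c : ℕ} (hc : 1 ≤ c ∧ c ≤ n - 1) :
    ∃ a b : Fin n, (a : ℕ) + 1 = b ∧ (b : ℕ) = c :=
  ⟨⟨c - 1, by omega⟩, ⟨c, by omega⟩, by simp only; omega, rfl⟩

theorem lt_of_adjacent {a b : Fin n} (hab : (a : ℕ) + 1 = b) : a < b :=
  Fin.lt_def.2 (by omega)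

theorem lt_or_gt_of_adjacent (w : Perm (Fin n)) {a b : Fin n} (hab : (a : ℕ) + 1 = b) :
    w a < w b ∨ w b < w a :=
  lt_or_gt_of_ne (w.injective.ne (lt_of_adjacent hab).ne)

theorem forall_letter_concat {l : List ℕ} (hl : ∀ j ∈ l, 1 ≤ j ∧ j ≤ n - 1)
    {a b : Fin n} (hab : (a : ℕ) + 1 = b) :
    ∀ j ∈ l ++ [(b : ℕ)], 1 ≤ j ∧ j ≤ n - 1 := by
  simp only [List.mem_append, List.mem_singleton]
  rintro j (hj | rfl)
  exacts [hl j hj, by omega]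

theorem simpleRefl_eq_swap {a b : Fin n} (hab : (a : ℕ) + 1 = b) :
    simpleRefl n b = swap a b := by
  rw [simpleRefl, dif_pos (by omega)]
  congr 1
  exact Fin.ext (by simp only; omega)

theorem simpleRefl_of_not_letter {c : ℕ} (hc : ¬(1 ≤ c ∧ c ≤ n - 1)) :
    simpleRefl n c = 1 :=
  dif_neg hc

theorem simpleRefl_mul_self (c : ℕ) : simpleRefl n c * simpleRefl n c = 1 := by
  by_cases hc : 1 ≤ c ∧ c ≤ n - 1
  · obtain ⟨a, b, hab, rfl⟩ := exists_adjacent_of_letter hc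
    rw [simpleRefl_eq_swap hab, swap_mul_self]
  · rw [simpleRefl_of_not_letter hc, one_mul]

@[simp]
theorem wordProd_nil : wordProd n [] = 1 := rfl

theorem wordProd_cons (c : ℕ) (l : List ℕ) :
    wordProd n (c :: l) = simpleRefl n c * wordProd n l := by
  simp [wordProd]

theorem wordProd_append (l l' : List ℕ) :
    wordProd n (l ++ l') = wordProd n l * wordProd n l' := by
  simp [wordProd]

theorem wordProd_concat (l : List ℕ) (c : ℕ) :
    wordProd n (l ++ [c]) = wordProd n l * simpleRefl n c := by
  simp [wordProd]

theorem simpleRefl_inv (c : ℕ) : (simpleRefl n c)⁻¹ = simpleRefl n c :=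
  inv_eq_of_mul_eq_one_left (simpleRefl_mul_self c)

theorem wordProd_reverse (l : List ℕ) : wordProd n l.reverse = (wordProd n l)⁻¹ := by
  induction l with
  | nil => simp
  | cons c l ih =>
    rw [List.reverse_cons, wordProd_concat, ih, wordProd_cons, mul_inv_rev, simpleRefl_inv]

end Words

section Inversions

variable {n : ℕ}

def inversions (w : Perm (Fin n)) : Finset (Fin n × Fin n) :=
  univ.filter fun p => p.1 < p.2 ∧ w p.2 < w p.1

@[simp]
theorem mem_inversions {w : Perm (Fin n)} {p : Fin n × Fin n} :
    p ∈ inversions w ↔ p.1 < p.2 ∧ w p.2 < w p.1 := by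
  simp [inversions]

@[simp]
theorem inversions_one : inversions (1 : Perm (Fin n)) = ∅ := by
  ext p
  simpa using le_of_lt

theorem swap_lt_swap_iff_of_adjacent {a b : Fin n} (hab : (a : ℕ) + 1 = b) (x y : Fin n) :
    swap a b x < swap a b y ∧ (swap a b x, swap a b y) ≠ (a, b) ↔
      x < y ∧ (x, y) ≠ (a, b) := by
  simp only [swap_apply_def]
  split_ifs <;> simp only [Fin.lt_def, Fin.ext_iff, ne_eq, Prod.mk.injEq, and_true, true_and,
    not_true_eq_false, and_false, false_iff] at * <;> omega

theorem card_inversions_mul_swap_of_lt {a b : Fin n} (hab : (a : ℕ) + 1 = b)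
    {w : Perm (Fin n)} (h : w a < w b) :
    #(inversions (w * swap a b)) = #(inversions w) + 1 := by
  have hmap : (inversions (w * swap a b)).erase (a, b) =
      ((inversions w).erase (a, b)).map (prodCongr (swap a b) (swap a b)).toEmbedding := by
    ext ⟨x, y⟩
    simp only [mem_erase, mem_inversions, mem_map_equiv, prodCongr_symm, symm_swap,
      prodCongr_apply, Prod.map, Perm.mul_apply]
    rw [← and_assoc, ← and_assoc, and_comm (a := _ ≠ _), and_comm (a := _ ≠ _),
      swap_lt_swap_iff_of_adjacent hab]
  rw [← card_erase_add_one (s := inversions (w * swap a b)) (a := (a, b))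
    (by simpa [lt_of_adjacent hab]), hmap, card_map,
    erase_eq_of_notMem (by simpa using fun _ => h.le)]

theorem card_inversions_mul_swap_of_gt {a b : Fin n} (hab : (a : ℕ) + 1 = b)
    {w : Perm (Fin n)} (h : w b < w a) :
    #(inversions (w * swap a b)) + 1 = #(inversions w) := by
  have := card_inversions_mul_swap_of_lt hab (w := w * swap a b) (by simpa using h)
  rwa [mul_swap_mul_self, eq_comm] at this

theorem card_inversions_mul_simpleRefl_le (w : Perm (Fin n)) (c : ℕ) :
    #(inversions (w * simpleRefl n c)) ≤ #(inversions w) + 1 := by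
  by_cases hc : 1 ≤ c ∧ c ≤ n - 1
  · obtain ⟨a, b, hab, rfl⟩ := exists_adjacent_of_letter hc
    rw [simpleRefl_eq_swap hab]
    rcases lt_or_gt_of_adjacent w hab with h | h
    · rw [card_inversions_mul_swap_of_lt hab h]
    · have := card_inversions_mul_swap_of_gt hab h
      omega
  · rw [simpleRefl_of_not_letter hc, mul_one]
    omega

theorem card_inversions_wordProd_le (l : List ℕ) : #(inversions (wordProd n l)) ≤ l.length := by
  induction l using List.reverseRecOn with
  | nil => simp
  | append_singleton l c ih =>
    rw [wordProd_concat, List.length_append, List.length_singleton]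
    exact (card_inversions_mul_simpleRefl_le _ c).trans (by omega)

theorem exists_adjacent_descent {w : Perm (Fin n)} (hw : w ≠ 1) :
    ∃ a b : Fin n, (a : ℕ) + 1 = b ∧ w b < w a := by
  by_contra! h
  apply hw
  cases n with
  | zero => exact Subsingleton.elim _ _
  | succ n =>
    have hmono : StrictMono w := Fin.strictMono_iff_lt_succ.2 fun i =>
      (h _ _ (by simp)).lt_of_ne (w.injective.ne Fin.castSucc_lt_succ.ne)
    ext x
    simp [congrFun hmono.eq_id x]

theorem exists_word_length_eq_card_inversions (w : Perm (Fin n)) :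
    ∃ l : List ℕ, (∀ j ∈ l, 1 ≤ j ∧ j ≤ n - 1) ∧ l.length = #(inversions w) ∧
      wordProd n l = w := by
  induction hk : #(inversions w) generalizing w with
  | zero =>
    refine ⟨[], by simp, rfl, ?_⟩
    by_contra hw
    obtain ⟨a, b, hab, h⟩ := exists_adjacent_descent (Ne.symm hw)
    exact card_ne_zero_of_mem (s := inversions w) (a := (a, b))
      (mem_inversions.2 ⟨lt_of_adjacent hab, h⟩) hk
  | succ k ih =>
    have hw : w ≠ 1 := by rintro rfl; rw [inversions_one, card_empty] at hk; omega
    obtain ⟨a, b, hab, h⟩ := exists_adjacent_descent hw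
    obtain ⟨l, hl, hlen, hprod⟩ := ih (w * swap a b)
      (by have := card_inversions_mul_swap_of_gt hab h; omega)
    refine ⟨l ++ [(b : ℕ)], forall_letter_concat hl hab, by simp [hlen], ?_⟩
    rw [wordProd_concat, hprod, simpleRefl_eq_swap hab, mul_swap_mul_self]

theorem len_eq_card_inversions (w : Perm (Fin n)) : len n w = #(inversions w) := by
  obtain ⟨l, hl, hlen, hprod⟩ := exists_word_length_eq_card_inversions w
  refine le_antisymm (Nat.sInf_le ⟨l, hl, hlen, hprod⟩) ?_
  obtain ⟨m, -, hm, rfl⟩ := Nat.sInf_mem (s := {k | ∃ l : List ℕ,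
    (∀ j ∈ l, 1 ≤ j ∧ j ≤ n - 1) ∧ l.length = k ∧ wordProd n l = w})
    ⟨_, l, hl, rfl, hprod⟩
  rw [len, ← hm]
  exact card_inversions_wordProd_le m

theorem len_wordProd_le (l : List ℕ) : len n (wordProd n l) ≤ l.length :=
  len_eq_card_inversions _ ▸ card_inversions_wordProd_le l

theorem len_mul_swap_of_lt {a b : Fin n} (hab : (a : ℕ) + 1 = b) {w : Perm (Fin n)}
    (h : w a < w b) : len n (w * swap a b) = len n w + 1 := by
  simp only [len_eq_card_inversions, card_inversions_mul_swap_of_lt hab h]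

theorem exists_reduced_word (w : Perm (Fin n)) : ∃ l, IsReduced n l ∧ wordProd n l = w := by
  obtain ⟨l, hl, hlen, rfl⟩ := exists_word_length_eq_card_inversions w
  exact ⟨l, ⟨hl, by rw [len_eq_card_inversions, hlen]⟩, rfl⟩

theorem isReduced_of_length_le {l : List ℕ} (hl : ∀ j ∈ l, 1 ≤ j ∧ j ≤ n - 1)
    (h : l.length ≤ len n (wordProd n l)) : IsReduced n l :=
  ⟨hl, (len_wordProd_le l).antisymm h⟩

theorem IsReduced.concat {m : List ℕ} (hm : IsReduced n m) {a b : Fin n}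
    (hab : (a : ℕ) + 1 = b) (h : wordProd n m a < wordProd n m b) :
    IsReduced n (m ++ [(b : ℕ)]) := by
  refine isReduced_of_length_le (forall_letter_concat hm.1 hab) ?_
  rw [wordProd_concat, simpleRefl_eq_swap hab, len_mul_swap_of_lt hab h, hm.2]
  simp

theorem IsReduced.of_concat {m : List ℕ} {c : ℕ} (h : IsReduced n (m ++ [c])) :
    IsReduced n m ∧ ∃ a b : Fin n, (a : ℕ) + 1 = b ∧ (b : ℕ) = c ∧
      wordProd n m a < wordProd n m b := by
  obtain ⟨a, b, hab, rfl⟩ := exists_adjacent_of_letter (h.1 c (by simp))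
  have hlen := h.2
  rw [wordProd_concat, simpleRefl_eq_swap hab, List.length_append, List.length_singleton] at hlen
  have hle := len_wordProd_le (n := n) m
  rcases lt_or_gt_of_adjacent (wordProd n m) hab with hasc | hdesc
  · rw [len_mul_swap_of_lt hab hasc] at hlen
    exact ⟨isReduced_of_length_le (fun j hj => h.1 j (by simp [hj])) (by omega),
      a, b, hab, rfl, hasc⟩
  · have := len_mul_swap_of_lt hab (w := wordProd n m * swap a b) (by simpa using hdesc)
    rw [mul_swap_mul_self] at this
    omega

end Inversions

section Bruhat

variable {n : ℕ}

def BruhatStep (n : ℕ) (u v : Perm (Fin n)) : Prop :=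
  ∃ a b : Fin n, a < b ∧ u a < u b ∧ v = u * swap a b

abbrev BruhatChain (n : ℕ) : Perm (Fin n) → Perm (Fin n) → Prop :=
  Relation.ReflTransGen (BruhatStep n)

theorem BruhatChain.mul_swap {u v : Perm (Fin n)} (huv : BruhatChain n u v) {a b : Fin n}
    (hab : (a : ℕ) + 1 = b) (hv : v a < v b) :
    BruhatChain n (u * swap a b) (v * swap a b) := by
  induction huv using Relation.ReflTransGen.head_induction_on with
  | refl => exact .refl
  | @head u x hstep hxv ih =>
    obtain ⟨p, q, hpq, hu, rfl⟩ := hstep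
    by_cases hpq' : (p, q) = (a, b)
    · simp only [Prod.mk.injEq] at hpq'
      obtain ⟨rfl, rfl⟩ := hpq'
      exact hxv.tail ⟨p, q, hpq, hv, rfl⟩
    · have hlt := (swap_lt_swap_iff_of_adjacent hab p q).2 ⟨hpq, hpq'⟩
      refine ih.head ⟨swap a b p, swap a b q, hlt.1, by simpa using hu, ?_⟩
      rw [swap_apply_apply, swap_inv]
      simp only [mul_assoc, swap_mul_self_mul]

theorem w0_mul_self : w0 n * w0 n = 1 := by
  ext x
  simp [w0]

theorem w0_inv : (w0 n)⁻¹ = w0 n :=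
  inv_eq_of_mul_eq_one_left w0_mul_self

theorem BruhatStep.mul_w0 {u v : Perm (Fin n)} (h : BruhatStep n u v) :
    BruhatStep n (v * w0 n) (u * w0 n) := by
  obtain ⟨a, b, hab, hu, rfl⟩ := h
  refine ⟨b.rev, a.rev, Fin.rev_lt_rev.2 hab, by simpa [w0] using hu, ?_⟩
  have hconj : swap b.rev a.rev = w0 n * swap a b * w0 n := by
    rw [swap_comm]
    nth_rw 2 [← w0_inv]
    exact swap_apply_apply (w0 n) a b
  rw [hconj]
  simp only [mul_assoc]
  rw [← mul_assoc (w0 n) (w0 n), w0_mul_self, one_mul, swap_mul_self_mul]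

theorem BruhatChain.mul_w0 {u v : Perm (Fin n)} (h : BruhatChain n u v) :
    BruhatChain n (v * w0 n) (u * w0 n) :=
  h.swap.lift (· * w0 n) fun _ _ hstep => hstep.mul_w0

theorem bruhatChain_mul_w0_iff {u v : Perm (Fin n)} :
    BruhatChain n (u * w0 n) v ↔ BruhatChain n (v * w0 n) u := by
  refine ⟨fun h => ?_, fun h => ?_⟩ <;>
  simpa only [mul_assoc, w0_mul_self, mul_one] using h.mul_w0

theorem eq_one_of_bruhatChain_one {u : Perm (Fin n)} (h : BruhatChain n u 1) : u = 1 := by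
  rcases h.cases_tail with rfl | ⟨x, -, a, b, hab, hx, hx1⟩
  · rfl
  · rw [eq_comm, mul_eq_one_iff_eq_inv, swap_inv] at hx1
    subst hx1
    simp only [swap_apply_left, swap_apply_right] at hx
    exact absurd hx (not_lt.2 hab.le)

theorem exists_wordProd_delete_eq_mul_swap {l : List ℕ} {a b : Fin n} (hab : a < b)
    (h : wordProd n l b < wordProd n l a) :
    ∃ l₁ c l₂, l = l₁ ++ c :: l₂ ∧
      wordProd n (l₁ ++ l₂) = wordProd n l * swap a b := by
  induction l with
  | nil => exact absurd h (not_lt.2 hab.le)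
  | cons c l ih =>
    rw [wordProd_cons] at h ⊢
    rcases lt_or_gt_of_ne ((wordProd n l).injective.ne hab.ne) with hl | hl
    · -- `wordProd n l` keeps `a`, `b` in order, so `c` must swap their images
      refine ⟨[], c, l, rfl, ?_⟩
      by_cases hc : 1 ≤ c ∧ c ≤ n - 1
      · obtain ⟨p, q, hpq, rfl⟩ := exists_adjacent_of_letter hc
        rw [simpleRefl_eq_swap hpq] at h ⊢
        have : (wordProd n l a, wordProd n l b) = (p, q) := by
          by_contra hne
          exact (lt_asymm h ((swap_lt_swap_iff_of_adjacent hpq _ _).2 ⟨hl, hne⟩).1)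
        simp only [Prod.mk.injEq] at this
        rw [List.nil_append, ← this.1, ← this.2, swap_apply_apply, inv_mul_cancel_right,
          mul_swap_mul_self]
      · rw [simpleRefl_of_not_letter hc, one_mul] at h
        exact absurd h (lt_asymm hl)
    · obtain ⟨l₁, d, l₂, rfl, hprod⟩ := ih hl
      exact ⟨c :: l₁, d, l₂, rfl, by rw [List.cons_append, wordProd_cons, hprod, mul_assoc]⟩

theorem exists_reduced_sublist {l : List ℕ} (hl : ∀ j ∈ l, 1 ≤ j ∧ j ≤ n - 1) :
    ∃ l', l'.Sublist l ∧ IsReduced n l' ∧ wordProd n l' = wordProd n l := by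
  induction l using List.reverseRecOn with
  | nil => exact ⟨[], .refl _, ⟨by simp, by simp [len_eq_card_inversions]⟩, rfl⟩
  | append_singleton m c ih =>
    obtain ⟨m', hm'm, hm', hprod⟩ := ih fun j hj => hl j (by simp [hj])
    obtain ⟨a, b, hab, rfl⟩ := exists_adjacent_of_letter (hl c (by simp))
    have hsub : m'.Sublist (m ++ [(b : ℕ)]) := hm'm.trans (List.sublist_append_left _ _)
    rw [wordProd_concat, ← hprod, simpleRefl_eq_swap hab]
    rcases lt_or_gt_of_adjacent (wordProd n m') hab with hasc | hdesc
    · refine ⟨m' ++ [(b : ℕ)], hm'm.append (.refl _), hm'.concat hab hasc, ?_⟩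
      rw [wordProd_concat, simpleRefl_eq_swap hab]
    · obtain ⟨l₁, d, l₂, rfl, hprod'⟩ :=
        exists_wordProd_delete_eq_mul_swap (lt_of_adjacent hab) hdesc
      refine ⟨l₁ ++ l₂, ((List.Sublist.refl _).middle d).trans hsub, ?_, hprod'⟩
      have hlen := len_mul_swap_of_lt hab (w := wordProd n (l₁ ++ d :: l₂) * swap a b)
        (by simpa using hdesc)
      rw [mul_swap_mul_self, hm'.2, ← hprod'] at hlen
      refine isReduced_of_length_le (fun j hj => hm'.1 j ?_) (by simp at hlen ⊢; omega)
      simp only [List.mem_append, List.mem_cons] at hj ⊢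
      tauto

theorem exists_reduced_sublist_of_bruhatChain {u v : Perm (Fin n)} (h : BruhatChain n u v)
    {l : List ℕ} (hl : IsReduced n l) (hv : wordProd n l = v) :
    ∃ l', l'.Sublist l ∧ IsReduced n l' ∧ wordProd n l' = u := by
  induction h generalizing l with
  | refl => exact ⟨l, .refl _, hl, hv⟩
  | @tail x v _ hstep ih =>
    obtain ⟨a, b, hab, hx, rfl⟩ := hstep
    obtain ⟨l₁, d, l₂, rfl, hprod⟩ :=
      exists_wordProd_delete_eq_mul_swap hab (l := l) (by simpa [hv] using hx)
    have hsub : (l₁ ++ l₂).Sublist (l₁ ++ d :: l₂) := (List.Sublist.refl _).middle d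
    obtain ⟨l', hl', hred, hprod'⟩ :=
      exists_reduced_sublist (n := n) fun j hj => hl.1 j (hsub.subset hj)
    obtain ⟨l'', hl'', hred'', rfl⟩ :=
      ih hred (by rw [hprod', hprod, hv, mul_swap_mul_self])
    exact ⟨l'', hl''.trans (hl'.trans hsub), hred'', rfl⟩

theorem bruhatChain_of_sublist {l l' : List ℕ} (hl : IsReduced n l) (h : l'.Sublist l) :
    BruhatChain n (wordProd n l') (wordProd n l) := by
  induction l using List.reverseRecOn generalizing l' with
  | nil => rw [List.sublist_nil.1 h]
  | append_singleton m c ih =>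
    obtain ⟨hm, a, b, hab, rfl, hasc⟩ := hl.of_concat
    obtain ⟨x, y, rfl, hx, hy⟩ := List.sublist_append_iff.1 h
    rw [wordProd_concat, simpleRefl_eq_swap hab]
    rcases List.sublist_singleton.1 hy with rfl | rfl
    · exact (List.append_nil x ▸ ih hm hx).tail ⟨a, b, lt_of_adjacent hab, hasc, rfl⟩
    · rw [wordProd_concat, simpleRefl_eq_swap hab]
      exact (ih hm hx).mul_swap hab hasc

theorem bruhatLE_iff_bruhatChain {u v : Perm (Fin n)} : bruhatLE n u v ↔ BruhatChain n u v := by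
  constructor
  · rintro ⟨l, l', hl, rfl, hsub, -, rfl⟩
    exact bruhatChain_of_sublist hl hsub
  · intro h
    obtain ⟨l, hl, rfl⟩ := exists_reduced_word v
    obtain ⟨l', hsub, hl', rfl⟩ := exists_reduced_sublist_of_bruhatChain h hl rfl
    exact ⟨l, l', hl, rfl, hsub, hl', rfl⟩

end Bruhat

section Demazure

variable {n : ℕ}

theorem demProd_concat (l : List ℕ) (c : ℕ) :
    demProd n (l ++ [c]) = demStep n (demProd n l) c := by
  rw [demProd, List.foldl_append]
  rfl

theorem bruhatChain_mul_swap_iff {D u : Perm (Fin n)} {a b : Fin n} (hab : (a : ℕ) + 1 = b)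
    (hD : D a < D b) :
    BruhatChain n u (D * swap a b) ↔
      BruhatChain n u D ∨ ∃ v, BruhatChain n v D ∧ u = v * swap a b := by
  constructor
  · intro h
    obtain ⟨m, hm, rfl⟩ := exists_reduced_word D
    have hmb := hm.concat hab hD
    obtain ⟨l', hl', -, rfl⟩ := exists_reduced_sublist_of_bruhatChain h hmb
      (by rw [wordProd_concat, simpleRefl_eq_swap hab])
    obtain ⟨x, y, rfl, hx, hy⟩ := List.sublist_append_iff.1 hl'
    rcases List.sublist_singleton.1 hy with rfl | rfl
    · rw [List.append_nil]
      exact .inl (bruhatChain_of_sublist hm hx)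
    · refine .inr ⟨_, bruhatChain_of_sublist hm hx, ?_⟩
      rw [wordProd_concat, simpleRefl_eq_swap hab]
  · rintro (h | ⟨v, hv, rfl⟩)
    · exact h.tail ⟨a, b, lt_of_adjacent hab, hD, rfl⟩
    · exact hv.mul_swap hab hD

theorem bruhatChain_demStep_iff {D u : Perm (Fin n)} {c : ℕ} :
    BruhatChain n u (demStep n D c) ↔
      BruhatChain n u D ∨ ∃ v, BruhatChain n v D ∧ u = v * simpleRefl n c := by
  by_cases hc : 1 ≤ c ∧ c ≤ n - 1
  · obtain ⟨a, b, hab, rfl⟩ := exists_adjacent_of_letter hc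
    rw [demStep, simpleRefl_eq_swap hab]
    rcases lt_or_gt_of_adjacent D hab with hasc | hdesc
    · rw [if_pos (by rw [len_mul_swap_of_lt hab hasc]; omega)]
      exact bruhatChain_mul_swap_iff hab hasc
    · have hasc : (D * swap a b) a < (D * swap a b) b := by simpa using hdesc
      have hlen := len_mul_swap_of_lt hab hasc
      rw [mul_swap_mul_self] at hlen
      rw [if_neg (by omega)]
      refine ⟨.inl, ?_⟩
      rintro (h | ⟨v, hv, rfl⟩)
      · exact h
      -- `D` is itself `(D * s) * s` with `D * s < D`, so the lifting property applies to `D * s`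
      rw [← mul_swap_mul_self a b D] at hv ⊢
      rcases (bruhatChain_mul_swap_iff hab hasc).1 hv with hv | ⟨v', hv', rfl⟩
      · exact hv.mul_swap hab hasc
      · rw [mul_swap_mul_self]
        exact hv'.tail ⟨a, b, lt_of_adjacent hab, hasc, rfl⟩
  · rw [demStep, simpleRefl_of_not_letter hc, mul_one, if_neg (lt_irrefl _)]
    simp

theorem bruhatChain_demProd_iff {u : Perm (Fin n)} {W : List ℕ} :
    BruhatChain n u (demProd n W) ↔ ∃ l, l.Sublist W ∧ wordProd n l = u := by
  induction W using List.reverseRecOn generalizing u with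
  | nil =>
    simp only [List.sublist_nil, exists_eq_left, wordProd_nil]
    exact ⟨fun h => (eq_one_of_bruhatChain_one h).symm, fun h => h ▸ .refl⟩
  | append_singleton M c ih =>
    simp only [demProd_concat, bruhatChain_demStep_iff, ih, List.sublist_append_iff,
      List.sublist_singleton]
    constructor
    · rintro (⟨l, hl, rfl⟩ | ⟨v, ⟨l, hl, rfl⟩, rfl⟩)
      · exact ⟨l, ⟨l, [], by simp, hl, .inl rfl⟩, rfl⟩
      · exact ⟨l ++ [c], ⟨l, [c], rfl, hl, .inr rfl⟩, wordProd_concat l c⟩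
    · rintro ⟨_, ⟨l, _, rfl, hl, rfl | rfl⟩, rfl⟩
      · exact .inl ⟨l, hl, by simp⟩
      · exact .inr ⟨_, ⟨l, hl, rfl⟩, wordProd_concat l c⟩

end Demazure

section Faces

variable {n : ℕ}

theorem mem_pairsLex {p : ℕ × ℕ} : p ∈ pairsLex n ↔ inTriangle n p := by
  simp only [pairsLex, inTriangle, List.mem_flatMap, List.mem_map, List.mem_range'_1]
  constructor
  · rintro ⟨i, hi, j, hj, rfl⟩
    omega
  · rintro ⟨h1, h2, h3⟩
    exact ⟨p.1, by omega, p.2, by omega, rfl⟩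

theorem pairsBar_eq_reverse : pairsBar n = (pairsFin n).reverse := by
  rw [pairsFin, pairsBar, List.reverse_flatMap, List.reverse_reverse]
  congr 1
  funext i
  simp [List.map_reverse]

theorem mem_pairsFin {p : ℕ × ℕ} : p ∈ pairsFin n ↔ inTriangle n p := by
  simp only [pairsFin, inTriangle, List.mem_flatMap, List.mem_map, List.mem_reverse,
    List.mem_range'_1]
  constructor
  · rintro ⟨i, hi, j, hj, rfl⟩
    omega
  · rintro ⟨h1, h2, h3⟩
    exact ⟨p.1, by omega, p.2, by omega, rfl⟩

theorem nodup_pairsLex : (pairsLex n).Nodup :=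
  nodup_flatMap_map_prodMk List.nodup_range' fun _ => List.nodup_range'

theorem nodup_pairsFin : (pairsFin n).Nodup :=
  nodup_flatMap_map_prodMk (List.nodup_reverse.2 List.nodup_range') fun _ => List.nodup_range'

/-- A word for `ϖ(F, F') = σ̄(F)⁻¹ σ(F')`, with its letters in the order of `𝔣(P) 𝔦(Q)`. -/
def faceWord (n : ℕ) (F F' : Finset (ℕ × ℕ)) : List ℕ :=
  ((pairsFin n).filter fun p => p ∈ F).map (fun p => p.2) ++
    ((pairsLex n).filter fun p => p ∈ F').map fun p => p.1 - p.2

theorem biVarpi_eq_wordProd_faceWord (F F' : Finset (ℕ × ℕ)) :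
    biVarpi n F F' = wordProd n (faceWord n F F') := by
  rw [biVarpi, sigmaBarF, sigmaF, pairsBar_eq_reverse, List.filter_reverse, List.map_reverse,
    wordProd_reverse, inv_inv, faceWord, wordProd_append]

theorem length_faceWord {F F' : Finset (ℕ × ℕ)} (hF : ∀ p ∈ F, inTriangle n p)
    (hF' : ∀ p ∈ F', inTriangle n p) : (faceWord n F F').length = #F + #F' := by
  rw [faceWord, List.length_append, List.length_map, List.length_map,
    length_filter_mem_eq_card nodup_pairsFin fun p hp => mem_pairsFin.2 (hF p hp),
    length_filter_mem_eq_card nodup_pairsLex fun p hp => mem_pairsLex.2 (hF' p hp)]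

theorem faceWord_sublist {F F' : Finset (ℕ × ℕ)} {P Q : ℕ → ℕ → ℝ}
    (hP : ∀ p ∈ F, P (p.1 - 1) p.2 = P p.1 (p.2 + 1))
    (hQ : ∀ p ∈ F', Q p.1 p.2 = Q (p.1 - 1) p.2) :
    (faceWord n F F').Sublist (fWord n P ++ iWord n Q) :=
  .append
    (.map _ (List.monotone_filter_right _ fun p hp => by simpa using hP p (by simpa using hp)))
    (.map _ (List.monotone_filter_right _ fun p hp => by simpa using hQ p (by simpa using hp)))

theorem exists_faceWord_eq_of_sublist {P Q : ℕ → ℕ → ℝ} {l : List ℕ}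
    (h : l.Sublist (fWord n P ++ iWord n Q)) :
    ∃ F F' : Finset (ℕ × ℕ), (∀ p ∈ F, inTriangle n p) ∧ (∀ p ∈ F', inTriangle n p) ∧
      faceWord n F F' = l ∧ (∀ p ∈ F, P (p.1 - 1) p.2 = P p.1 (p.2 + 1)) ∧
      (∀ p ∈ F', Q p.1 p.2 = Q (p.1 - 1) p.2) := by
  obtain ⟨x, y, rfl, hx, hy⟩ := List.sublist_append_iff.1 h
  obtain ⟨F, hF, rfl⟩ := exists_finset_of_sublist_map_filter nodup_pairsFin hx
  obtain ⟨F', hF', rfl⟩ := exists_finset_of_sublist_map_filter nodup_pairsLex hy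
  exact ⟨F, F', fun p hp => mem_pairsFin.1 (hF p hp).1,
    fun p hp => mem_pairsLex.1 (hF' p hp).1, rfl, fun p hp => of_decide_eq_true (hF p hp).2,
    fun p hp => of_decide_eq_true (hF' p hp).2⟩

theorem letter_bounds_of_mem_fWord_append_iWord {P Q : ℕ → ℕ → ℝ} {j : ℕ}
    (hj : j ∈ fWord n P ++ iWord n Q) : 1 ≤ j ∧ j ≤ n - 1 := by
  simp only [fWord, iWord, List.mem_append, List.mem_map, List.mem_filter] at hj
  rcases hj with ⟨p, ⟨hp, -⟩, rfl⟩ | ⟨p, ⟨hp, -⟩, rfl⟩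
  · obtain ⟨_, _, _⟩ := mem_pairsFin.1 hp
    omega
  · obtain ⟨_, _, _⟩ := mem_pairsLex.1 hp
    omega

end Faces

theorem biKogan_union_eq_GT_general (n : ℕ) (lam mu : ℕ → ℤ) (w : Equiv.Perm (Fin n)) :
    {PQ : (ℕ → ℕ → ℝ) × (ℕ → ℕ → ℝ) | ∃ F F' : Finset (ℕ × ℕ),
        (∀ p ∈ F, inTriangle n p) ∧ (∀ p ∈ F', inTriangle n p) ∧
        biKoganReduced n F F' ∧ biVarpi n F F' = w * w0 n ∧
        PQ ∈ biKoganFace n lam mu F F'} =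
    {PQ : (ℕ → ℕ → ℝ) × (ℕ → ℕ → ℝ) | PQ.1 ∈ GTset n lam ∧ PQ.2 ∈ GTset n mu ∧
        bruhatLE n (demProd n (fWord n PQ.1 ++ iWord n PQ.2) * w0 n) w} := by
  ext ⟨P, Q⟩
  simp only [Set.mem_ofPred_eq, biKoganFace, biKoganReduced, biVarpi_eq_wordProd_faceWord,
    bruhatLE_iff_bruhatChain, bruhatChain_mul_w0_iff, bruhatChain_demProd_iff]
  constructor
  · rintro ⟨F, F', -, -, -, hϖ, hP, hQ, hFP, hFQ⟩
    exact ⟨hP, hQ, _, faceWord_sublist hFP hFQ, hϖ⟩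
  · rintro ⟨hP, hQ, l, hl, hlw⟩
    obtain ⟨l', hl', hred, hprod⟩ :=
      exists_reduced_sublist fun j hj => letter_bounds_of_mem_fWord_append_iWord (hl.subset hj)
    obtain ⟨F, F', hF, hF', rfl, hFP, hFQ⟩ := exists_faceWord_eq_of_sublist (hl'.trans hl)
    refine ⟨F, F', hF, hF', ?_, hprod.trans hlw, hP, hQ, hFP, hFQ⟩
    rw [hred.2, length_faceWord hF hF']

/-- `K_{λ,μ}(w w₀) = GT(λ,w,μ)`: the union of all reduced BiKogan faces
`K_{λ,μ}(F,F')` with `ϖ(F,F') = w w₀` equals the set of pairs `(P,Q) ∈ GT(λ)×GT(μ)` with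
`𝔭(P,Q) = *(w(P,Q))·w₀ ≤ w`. -/
theorem biKogan_union_eq_GT (n : ℕ) (hn : 1 ≤ n) (lam mu : ℕ → ℤ)
    (hlam : IsPartition n lam) (hmu : IsPartition n mu) (w : Equiv.Perm (Fin n)) :
    {PQ : (ℕ → ℕ → ℝ) × (ℕ → ℕ → ℝ) | ∃ F F' : Finset (ℕ × ℕ),
        (∀ p ∈ F, inTriangle n p) ∧ (∀ p ∈ F', inTriangle n p) ∧
        biKoganReduced n F F' ∧ biVarpi n F F' = w * w0 n ∧
        PQ ∈ biKoganFace n lam mu F F'} =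
    {PQ : (ℕ → ℕ → ℝ) × (ℕ → ℕ → ℝ) | PQ.1 ∈ GTset n lam ∧ PQ.2 ∈ GTset n mu ∧
        bruhatLE n (demProd n (fWord n PQ.1 ++ iWord n PQ.2) * w0 n) w} :=
  biKogan_union_eq_GT_general n lam mu w

end KK
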